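/- arXiv:2311.07369 — 6 statements merged into one kernel-verified Lean document; each statement's English description precedes it below -/
import Mathlib

section
/- Let N be a set of node constructors equipped with a measure m : N → O into a set O carrying a well-founded strict partial order <. Then every measured tree expansion a → a' between closed trees over N strictly decreases the tree measure: m_Tree(a') < m_Tree(a) in the twice-iterated Dershowitz–Manna multiset extension of <. Consequently, there is no infinite sequence a₀ → a₁ → a₂ → ⋯ of measured tree expansions. -/
/-- Open finitely-branching trees over node constructors `N` and variables `V`. -/
inductive Tree' (N : Type) (V : Type) : Type where
  | leaf : V → Tree' N V
  | node : N → List (Tree' N V) → Tree' N V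

/-- Closed trees: no variables. -/
abbrev CTree (N : Type) := Tree' N Empty

/-- Root constructor of a closed tree. -/
def CTree.constr {N : Type} : CTree N → N
  | .leaf v => v.elim
  | .node c _ => c

/-- Grafting: replace each leaf (which carries a closed tree) by that tree. -/
def graft {N : Type} : Tree' N (CTree N) → CTree N
  | .leaf t => t
  | .node c ts => .node c (ts.attach.map fun t => graft t.1)
decreasing_by all_goals (simp_wf; have := List.sizeOf_lt_of_mem t.2; simp_all; omega)

/-- The list of variables decorating the leaves of a tree. -/
def Tree'.leaves {N V : Type} : Tree' N V → List V
  | .leaf v => [v]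
  | .node _ ts => (ts.attach.map fun t => t.1.leaves).flatten
decreasing_by all_goals (simp_wf; have := List.sizeOf_lt_of_mem t.2; simp_all; omega)

/-- The list of node constructors occurring in a tree. -/
def Tree'.constrs {N V : Type} : Tree' N V → List N
  | .leaf _ => []
  | .node c ts => c :: (ts.attach.map fun t => t.1.constrs).flatten
decreasing_by all_goals (simp_wf; have := List.sizeOf_lt_of_mem t.2; simp_all; omega)

/-- `AtPath a π b` : `b` is the subtree occurrence of `a` addressed by the
path `π` (read from the root: the first index selects a child, etc.). -/
inductive AtPath {N V : Type} : Tree' N V → List ℕ → Tree' N V → Prop where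
  | nil : ∀ a, AtPath a [] a
  | cons : ∀ (c : N) (ts : List (Tree' N V)) (i : ℕ) (a b : Tree' N V) (π : List ℕ),
      ts[i]? = some a → AtPath a π b → AtPath (.node c ts) (i :: π) b

/-- `s` is a strict subtree of `b`: it occurs at some nonempty path. -/
def IsStrictSubtree {N : Type} (s b : CTree N) : Prop :=
  ∃ π : List ℕ, π ≠ [] ∧ AtPath b π s

/-- Measured tree expansion with respect to a measure `m : N → O` and a strict
order `r` on `O`: a head tree expansion, applied at an arbitrary subtree
occurrence, replacing a subtree `b` by `graft bs` where the leaves of `bs` are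
strict subtrees of `b` and all new node constructors of `bs` have measure
strictly `r`-below the measure of the root constructor of `b`. -/
inductive MExp {N O : Type} (m : N → O) (r : O → O → Prop) : CTree N → CTree N → Prop where
  | head : ∀ (b : CTree N) (bs : Tree' N (CTree N)),
      (∀ s ∈ bs.leaves, IsStrictSubtree s b) →
      (∀ c ∈ bs.constrs, r (m c) (m (CTree.constr b))) →
      MExp m r b (graft bs)
  | congr : ∀ (c : N) (pre post : List (CTree N)) (t t' : CTree N),
      MExp m r t t' →
      MExp m r (.node c (pre ++ t :: post)) (.node c (pre ++ t' :: post))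

/-- `m_Path(a)(π)`: the multiset of measures of the constructors lying strictly
above the subtree addressed by `π`, endpoints: root of `a` included, the
addressed subtree excluded. -/
def pathMeasure {N O V : Type} (m : N → O) : Tree' N V → List ℕ → Multiset O
  | _, [] => 0
  | .leaf _, _ :: _ => 0
  | .node c ts, i :: π =>
      match ts[i]? with
      | some a => {m c} + pathMeasure m a π
      | none => 0

/-- `m_Tree(a)`: the multiset, over all subtree occurrences `b` of `a`, of the
node measures `m_Node(a)(b)` (the multiset of measures of the constructors on
the path from the root of `a` down to `b`, both endpoints included). -/
def treeMeasure {N O : Type} (m : N → O) : CTree N → Multiset (Multiset O)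
  | .leaf v => v.elim
  | .node c ts =>
      {({m c} : Multiset O)} +
        ((ts.attach.map fun t =>
            (treeMeasure m t.1).map (fun M => ({m c} : Multiset O) + M)).foldr (· + ·) 0)
decreasing_by all_goals (simp_wf; have := List.sizeOf_lt_of_mem t.2; simp_all; omega)

/-- The (strict) Dershowitz–Manna multiset extension of a relation `r`. -/
def DMLT {α : Type} (r : α → α → Prop) (M N : Multiset α) : Prop :=
  ∃ X Y Z : Multiset α, Z ≠ 0 ∧ M = X + Y ∧ N = X + Z ∧ ∀ y ∈ Y, ∃ z ∈ Z, r y z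

/- ===================== Auxiliary material ===================== -/

section WF

open Relation

variable {α : Type} {ρ : α → α → Prop}

theorem transGen_cutExpand_add_left (C : Multiset α) {s' s : Multiset α}
    (h : TransGen (CutExpand ρ) s' s) : TransGen (CutExpand ρ) (C + s') (C + s) := by
  induction h with
  | single h => exact TransGen.single ((Relation.cutExpand_add_left C).2 h)
  | tail _ h ih => exact ih.tail ((Relation.cutExpand_add_left C).2 h)

theorem transGen_cutExpand_of_forall :
    ∀ Z : Multiset α, Z ≠ 0 → ∀ Y : Multiset α, (∀ y ∈ Y, ∃ z ∈ Z, ρ y z) →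
      TransGen (CutExpand ρ) Y Z := by
  intro Z
  induction Z using Multiset.induction with
  | empty => intro h; exact absurd rfl h
  | cons z Z ih =>
    intro _ Y hY
    classical
    by_cases hZ : Z = 0
    · subst hZ
      refine TransGen.single ?_
      have hy : ∀ y ∈ Y, ρ y z := by
        intro y hy
        obtain ⟨z', hz', h⟩ := hY y hy
        simp only [Multiset.cons_zero, Multiset.mem_singleton] at hz'
        exact hz' ▸ h
      simpa using Relation.cutExpand_singleton hy
    · set Y₁ := Y.filter (fun y => ρ y z) with hY₁def
      set Y₂ := Y.filter (fun y => ¬ ρ y z) with hY₂def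
      have hsplit : Y₁ + Y₂ = Y := Multiset.filter_add_not _ _
      have hY₂ : ∀ y ∈ Y₂, ∃ z' ∈ Z, ρ y z' := by
        intro y hy
        have hy' := Multiset.mem_of_mem_filter hy
        have hnot := Multiset.of_mem_filter hy
        obtain ⟨z', hz', h⟩ := hY y hy'
        rcases Multiset.mem_cons.1 hz' with rfl | hz'
        · exact absurd h hnot
        · exact ⟨z', hz', h⟩
      have step2 : TransGen (CutExpand ρ) (Y₁ + Y₂) (Y₁ + Z) :=
        transGen_cutExpand_add_left Y₁ (ih hZ Y₂ hY₂)
      have step1 : CutExpand ρ (Y₁ + Z) (z ::ₘ Z) := by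
        have h1 : CutExpand ρ Y₁ {z} := by
          refine Relation.cutExpand_singleton (fun y hy => ?_)
          rw [hY₁def] at hy
          exact Multiset.of_mem_filter (p := fun y => ρ y z) hy
        have : CutExpand ρ (Z + Y₁) (Z + {z}) := (Relation.cutExpand_add_left Z).2 h1
        have e1 : Z + Y₁ = Y₁ + Z := add_comm _ _
        have e2 : Z + {z} = z ::ₘ Z := by
          rw [add_comm]; rfl
        rwa [e1, e2] at this
      exact (hsplit ▸ step2).tail step1

theorem dmlt_subrel_transGen_cutExpand {M N : Multiset α} (h : DMLT ρ M N) :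
    TransGen (CutExpand ρ) M N := by
  obtain ⟨X, Y, Z, hZ, rfl, rfl, hy⟩ := h
  exact transGen_cutExpand_add_left X (transGen_cutExpand_of_forall Z hZ Y hy)

theorem DMLT_wf (h : WellFounded ρ) : WellFounded (DMLT ρ) :=
  Subrelation.wf (fun hd => dmlt_subrel_transGen_cutExpand hd) h.cutExpand.transGen

theorem DMLT_add_left (C : Multiset α) {M M' : Multiset α} (h : DMLT ρ M M') :
    DMLT ρ (C + M) (C + M') := by
  obtain ⟨X, Y, Z, hZ, rfl, rfl, hy⟩ := h
  exact ⟨C + X, Y, Z, hZ, by rw [add_assoc], by rw [add_assoc], hy⟩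

theorem DMLT_map {β : Type} {σ : β → β → Prop} (f : α → β)
    (hf : ∀ x y, ρ x y → σ (f x) (f y)) {M M' : Multiset α} (h : DMLT ρ M M') :
    DMLT σ (M.map f) (M'.map f) := by
  obtain ⟨X, Y, Z, hZ, rfl, rfl, hy⟩ := h
  refine ⟨X.map f, Y.map f, Z.map f, by simpa using hZ, by simp, by simp, ?_⟩
  intro y hy'
  obtain ⟨y0, hy0, rfl⟩ := Multiset.mem_map.1 hy'
  obtain ⟨z, hz, hr⟩ := hy y0 hy0
  exact ⟨f z, Multiset.mem_map_of_mem f hz, hf _ _ hr⟩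

end WF

section Trees

/-- Structural induction principle for `Tree'`. -/
theorem Tree'.indOn {N V : Type} {P : Tree' N V → Prop}
    (hl : ∀ v, P (.leaf v))
    (hn : ∀ c ts, (∀ t ∈ ts, P t) → P (.node c ts)) : ∀ t, P t
  | .leaf v => hl v
  | .node c ts => hn c ts fun t ht => Tree'.indOn hl hn t
termination_by t => sizeOf t
decreasing_by (have := List.sizeOf_lt_of_mem ht; simp_all; omega)

variable {N O : Type} {m : N → O} {r : O → O → Prop}

theorem treeMeasure_node (m : N → O) (c : N) (ts : List (CTree N)) :
    treeMeasure m (.node c ts) =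
      {({m c} : Multiset O)} +
        (ts.map fun t => (treeMeasure m t).map (fun M => ({m c} : Multiset O) + M)).sum := by
  rw [treeMeasure,
    List.attach_map_val (l := ts) (f := fun t => (treeMeasure m t).map (fun M => ({m c} : Multiset O) + M)),
    List.sum_eq_foldr]

theorem mem_listSum {β : Type} {x : β} :
    ∀ {l : List (Multiset β)}, x ∈ l.sum ↔ ∃ s ∈ l, x ∈ s := by
  intro l
  induction l with
  | nil => simp
  | cons a l ih => simp [ih]

theorem mem_treeMeasure_node {c : N} {ts : List (CTree N)} {t : CTree N} {M'' : Multiset O}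
    (ht : t ∈ ts) (h : M'' ∈ treeMeasure m t) :
    ({m c} + M'' : Multiset O) ∈ treeMeasure m (Tree'.node c ts) := by
  rw [treeMeasure_node]
  refine Multiset.mem_add.2 (Or.inr ?_)
  exact mem_listSum.2 ⟨_, List.mem_map_of_mem ht, Multiset.mem_map_of_mem _ h⟩

theorem root_mem_treeMeasure : ∀ b : CTree N,
    ({m (CTree.constr b)} : Multiset O) ∈ treeMeasure m b
  | .leaf v => v.elim
  | .node c ts => by
      rw [treeMeasure_node]
      exact Multiset.mem_add.2 (Or.inl (Multiset.mem_singleton_self _))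

theorem pathMeasure_nil (a : CTree N) : pathMeasure m a ([] : List ℕ) = 0 := by
  cases a <;> rfl

theorem pathMeasure_mem {b s : CTree N} {π : List ℕ} (h : AtPath b π s) :
    ∀ M' ∈ treeMeasure m s, pathMeasure m b π + M' ∈ treeMeasure m b := by
  induction h with
  | nil a => intro M' h; rw [pathMeasure_nil, zero_add]; exact h
  | cons c ts i a b' π hget _ ih =>
    intro M' hM'
    have hpm : pathMeasure m (Tree'.node c ts) (i :: π) = {m c} + pathMeasure m a π := by
      rw [pathMeasure, hget]
    rw [hpm, add_assoc]
    exact mem_treeMeasure_node (List.mem_of_getElem? hget) (ih M' hM')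

theorem pathMeasure_cons {b s : CTree N} {i : ℕ} {π : List ℕ} (h : AtPath b (i :: π) s) :
    ∃ R, pathMeasure m b (i :: π) = {m (CTree.constr b)} + R := by
  cases h with
  | cons c ts i a b' π hget h' =>
    exact ⟨pathMeasure m a π, by rw [pathMeasure, hget]; rfl⟩

theorem leaves_node_mem {V : Type} {c : N} {ts : List (Tree' N V)} {t : Tree' N V}
    (ht : t ∈ ts) {s : V} (h : s ∈ t.leaves) : s ∈ (Tree'.node c ts).leaves := by
  rw [Tree'.leaves, List.mem_flatten]
  exact ⟨t.leaves, List.mem_map.2 ⟨⟨t, ht⟩, List.mem_attach _ _, rfl⟩, h⟩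

theorem constrs_node_self {V : Type} {c : N} {ts : List (Tree' N V)} :
    c ∈ (Tree'.node c ts).constrs := by
  rw [Tree'.constrs]; exact List.mem_cons_self

theorem constrs_node_mem {V : Type} {c d : N} {ts : List (Tree' N V)} {t : Tree' N V}
    (ht : t ∈ ts) (h : d ∈ t.constrs) : d ∈ (Tree'.node c ts).constrs := by
  rw [Tree'.constrs]
  refine List.mem_cons_of_mem _ (List.mem_flatten.2 ?_)
  exact ⟨t.constrs, List.mem_map.2 ⟨⟨t, ht⟩, List.mem_attach _ _, rfl⟩, h⟩

/-- Key lemma: every node measure of `graft bs` is dominated, in a strong sense,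
by some node measure of `b`. -/
theorem key_lemma (b : CTree N) :
    ∀ bs : Tree' N (CTree N),
      (∀ s ∈ bs.leaves, IsStrictSubtree s b) →
      (∀ c ∈ bs.constrs, r (m c) (m (CTree.constr b))) →
      ∀ M' ∈ treeMeasure m (graft bs),
        ∃ M ∈ treeMeasure m b, ∃ X Y Z : Multiset O,
          M' = X + Y ∧ M = X + Z ∧ m (CTree.constr b) ∈ Z ∧
          ∀ y ∈ Y, r y (m (CTree.constr b)) := by
  intro bs
  induction bs using Tree'.indOn with
  | hl s =>
    intro hlv _ M' hM'
    have hg : graft (Tree'.leaf s) = s := by rw [graft]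
    rw [hg] at hM'
    obtain ⟨π, hne, hpath⟩ := hlv s (by rw [Tree'.leaves]; exact List.mem_singleton_self _)
    cases π with
    | nil => exact absurd rfl hne
    | cons i π' =>
      obtain ⟨R, hR⟩ := pathMeasure_cons hpath
      refine ⟨pathMeasure m b (i :: π') + M', pathMeasure_mem hpath M' hM', M', 0,
        pathMeasure m b (i :: π'), (add_zero M').symm, add_comm _ _, ?_, by simp⟩
      rw [hR]
      exact Multiset.mem_add.2 (Or.inl (Multiset.mem_singleton_self _))
  | hn c ts ih =>
    intro hlv hcon M' hM'
    have hrc : r (m c) (m (CTree.constr b)) := hcon c constrs_node_self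
    have hg : graft (Tree'.node c ts) = .node c (ts.attach.map fun t => graft t.1) := by
      rw [graft]
    rw [hg, treeMeasure_node, List.map_map] at hM'
    rcases Multiset.mem_add.1 hM' with h1 | h1
    · rw [Multiset.mem_singleton] at h1
      subst h1
      exact ⟨{m (CTree.constr b)}, root_mem_treeMeasure b, 0, {m c}, {m (CTree.constr b)},
        (zero_add _).symm, (zero_add _).symm, Multiset.mem_singleton_self _,
        fun y hy => (Multiset.mem_singleton.1 hy) ▸ hrc⟩
    · obtain ⟨L, hL, hM'L⟩ := mem_listSum.1 h1
      obtain ⟨⟨t, ht⟩, _, rfl⟩ := List.mem_map.1 hL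
      obtain ⟨M'', hM'', rfl⟩ := Multiset.mem_map.1 hM'L
      obtain ⟨M, hM, X, Y, Z, e1, e2, hc0, hY⟩ :=
        ih t ht (fun s hs => hlv s (leaves_node_mem ht hs))
          (fun d hd => hcon d (constrs_node_mem ht hd)) M'' hM''
      refine ⟨M, hM, X, {m c} + Y, Z, ?_, e2, hc0, ?_⟩
      · rw [e1, add_left_comm]
      · intro y hy
        rcases Multiset.mem_add.1 hy with hy | hy
        · exact (Multiset.mem_singleton.1 hy) ▸ hrc
        · exact hY y hy

theorem treeMeasure_ne_zero (b : CTree N) : treeMeasure m b ≠ 0 := by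
  intro h
  exact absurd (h ▸ root_mem_treeMeasure (m := m) b) (Multiset.notMem_zero _)

theorem head_decrease (b : CTree N) (bs : Tree' N (CTree N))
    (hlv : ∀ s ∈ bs.leaves, IsStrictSubtree s b)
    (hcon : ∀ c ∈ bs.constrs, r (m c) (m (CTree.constr b))) :
    DMLT (DMLT r) (treeMeasure m (graft bs)) (treeMeasure m b) := by
  refine ⟨0, treeMeasure m (graft bs), treeMeasure m b, treeMeasure_ne_zero b,
    (zero_add _).symm, (zero_add _).symm, ?_⟩
  intro M' hM'
  obtain ⟨M, hM, X, Y, Z, e1, e2, hc0, hY⟩ := key_lemma b bs hlv hcon M' hM'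
  refine ⟨M, hM, X, Y, Z, ?_, e1, e2, fun y hy => ⟨_, hc0, hY y hy⟩⟩
  intro h0
  exact absurd (h0 ▸ hc0) (Multiset.notMem_zero _)

theorem mexp_decrease {a a' : CTree N} (h : MExp m r a a') :
    DMLT (DMLT r) (treeMeasure m a') (treeMeasure m a) := by
  induction h with
  | head b bs hlv hcon => exact head_decrease b bs hlv hcon
  | congr c pre post t t' _ ih =>
    have hmap : DMLT (DMLT r)
        ((treeMeasure m t').map (fun M => ({m c} : Multiset O) + M))
        ((treeMeasure m t).map (fun M => ({m c} : Multiset O) + M)) :=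
      DMLT_map _ (fun x y h => DMLT_add_left {m c} h) ih
    have e : ∀ u : CTree N,
        treeMeasure m (Tree'.node c (pre ++ u :: post)) =
          ({({m c} : Multiset O)} +
            ((pre.map fun v => (treeMeasure m v).map (fun M => ({m c} : Multiset O) + M)).sum +
             (post.map fun v => (treeMeasure m v).map (fun M => ({m c} : Multiset O) + M)).sum)) +
          (treeMeasure m u).map (fun M => ({m c} : Multiset O) + M) := by
      intro u
      rw [treeMeasure_node, List.map_append, List.map_cons, List.sum_append, List.sum_cons]
      abel
    rw [e t, e t']
    exact DMLT_add_left _ hmap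

end Trees

/-- if `m : N → O` is a measure into a well-founded strict
partial order `r`, then every measured tree expansion strictly decreases the
tree measure for the twice-iterated Dershowitz–Manna multiset extension of
`r`; consequently there is no infinite sequence of measured tree expansions. -/
theorem measured_expansions_decrease_and_terminate
    {N O : Type} (m : N → O) (r : O → O → Prop)
    (htrans : Transitive r) (hirrefl : Irreflexive r) (hwf : WellFounded r) :
    (∀ a a' : CTree N, MExp m r a a' →
        DMLT (DMLT r) (treeMeasure m a') (treeMeasure m a)) ∧
    ¬ ∃ seq : ℕ → CTree N, ∀ n, MExp m r (seq n) (seq (n + 1)) := by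
  have dec : ∀ a a' : CTree N, MExp m r a a' →
      DMLT (DMLT r) (treeMeasure m a') (treeMeasure m a) :=
    fun a a' h => mexp_decrease h
  refine ⟨dec, ?_⟩
  rintro ⟨seq, hseq⟩
  have hwf2 : WellFounded (DMLT (DMLT r)) := DMLT_wf (DMLT_wf hwf)
  have hdec : ∀ n, DMLT (DMLT r) (treeMeasure m (seq (n + 1))) (treeMeasure m (seq n)) :=
    fun n => dec _ _ (hseq n)
  have key : ∀ M : Multiset (Multiset O), ∀ n, treeMeasure m (seq n) ≠ M := by
    intro M
    induction M using hwf2.induction with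
    | _ M ih =>
      intro n h
      exact ih _ (h ▸ hdec n) (n + 1) rfl
  exact key (treeMeasure m (seq 0)) 0 rfl
end

section
/- Translate annotated first-order terms to closed trees by tree(x) := a leaf node with constructor x and no children, and tree(f(t̄₁,…,t̄ₙ)^l) := a node with constructor (f,l) and children tree(t̄₁),…,tree(t̄ₙ); measure node constructors by m(x) := ⊥ for a formal bottom element and m((f,l)) := l, where traces are strictly ordered by reverse strict inclusion of their underlying sets (l < l' iff l ⊋ l' as sets), an order that is well-founded since F is finite. Then for every annotated reduction step t̄ → t̄' (in any definition environment D), the pair of trees tree(t̄) → tree(t̄') is a measured tree expansion with respect to m. -/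
/-- First-order terms over function names `F` and variables `X`. -/
inductive Tm (F : Type) (X : Type) : Type where
  | var : X → Tm F X
  | app : F → List (Tm F X) → Tm F X

/-- Annotated first-order terms: each application node carries a trace (list of
function names). -/
inductive ATm (F : Type) (X : Type) : Type where
  | var : X → ATm F X
  | app : F → List (ATm F X) → List F → ATm F X

/-- A definition environment: each function name has an arity and a body whose
free variables are among `x₁, …, xₙ` (modelled as `Fin (arity f)`). -/
structure Env (F : Type) where
  arity : F → ℕ
  body : (f : F) → Tm F (Fin (arity f))

/-- The annotating substitution `t[σ]^l`. -/
def annSub {F X V : Type} (σ : V → ATm F X) (l : List F) : Tm F V → ATm F X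
  | .var v => σ v
  | .app f ts => .app f (ts.attach.map fun t => annSub σ l t.1) l
decreasing_by all_goals (simp_wf; have := List.sizeOf_lt_of_mem t.2; simp_all; omega)

/-- Ordinary (capture-free) substitution on unannotated terms. -/
def subst {F X V : Type} (σ : V → Tm F X) : Tm F V → Tm F X
  | .var v => σ v
  | .app f ts => .app f (ts.attach.map fun t => subst σ t.1)
decreasing_by all_goals (simp_wf; have := List.sizeOf_lt_of_mem t.2; simp_all; omega)

/-- Erasure: delete all traces. -/
def erase {F X : Type} : ATm F X → Tm F X
  | .var x => .var x
  | .app f ts _ => .app f (ts.attach.map fun t => erase t.1)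
decreasing_by all_goals (simp_wf; have := List.sizeOf_lt_of_mem t.2; simp_all; omega)

/-- One step of annotated reduction with respect to `D`. -/
inductive ARed {F X : Type} (D : Env F) : ATm F X → ATm F X → Prop where
  | head : ∀ (f : F) (l : List F) (args : List (ATm F X))
      (h : args.length = D.arity f), f ∉ l →
      ARed D (.app f args l)
        (annSub (fun i => args.get (Fin.cast h.symm i)) (l ++ [f]) (D.body f))
  | congr : ∀ (f : F) (l : List F) (pre post : List (ATm F X)) (t t' : ATm F X),
      ARed D t t' →
      ARed D (.app f (pre ++ t :: post) l) (.app f (pre ++ t' :: post) l)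

/-- One step of β-reduction on unannotated terms with respect to `D`. -/
inductive Beta {F X : Type} (D : Env F) : Tm F X → Tm F X → Prop where
  | head : ∀ (f : F) (args : List (Tm F X)) (h : args.length = D.arity f),
      Beta D (.app f args)
        (subst (fun i => args.get (Fin.cast h.symm i)) (D.body f))
  | congr : ∀ (f : F) (pre post : List (Tm F X)) (t t' : Tm F X),
      Beta D t t' →
      Beta D (.app f (pre ++ t :: post)) (.app f (pre ++ t' :: post))

/-- Subterm relation on annotated terms. -/
inductive ASubtm {F X : Type} : ATm F X → ATm F X → Prop where
  | refl : ∀ t, ASubtm t t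
  | arg : ∀ (s u : ATm F X) (f : F) (args : List (ATm F X)) (l : List F),
      u ∈ args → ASubtm s u → ASubtm s (.app f args l)

/-- Subterm relation on unannotated terms. -/
inductive Subtm {F X : Type} : Tm F X → Tm F X → Prop where
  | refl : ∀ t, Subtm t t
  | arg : ∀ (s u : Tm F X) (f : F) (args : List (Tm F X)),
      u ∈ args → Subtm s u → Subtm s (.app f args)

/-- `t[∅]^∅`: annotate an unannotated term with empty traces everywhere. -/
def annInit {F X : Type} (t : Tm F X) : ATm F X := annSub (fun x => .var x) [] t

/-- A term is reachable if it occurs as a subterm of a term in an annotated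
reduction sequence starting from a term annotated with empty traces. -/
def Reachable {F X : Type} (D : Env F) (s : ATm F X) : Prop :=
  ∃ (t : Tm F X) (w : ATm F X),
    Relation.ReflTransGen (ARed D) (annInit t) w ∧ ASubtm s w

/-- `t̄` contains a blocked redex `f(…)^l` with `f ∈ l`. -/
def HasBlockedRedex {F X : Type} (t : ATm F X) : Prop :=
  ∃ (f : F) (args : List (ATm F X)) (l : List F),
    ASubtm (.app f args l) t ∧ f ∈ l

/-- The translation of annotated terms to closed trees: a variable becomes a
childless node with constructor `x`, and `f(t̄₁,…,t̄ₙ)^l` becomes a node with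
constructor `(f, l)` and children the translated arguments. -/
def atree {F X : Type} : ATm F X → CTree (X ⊕ F × List F)
  | .var x => .node (.inl x) []
  | .app f args l => .node (.inr (f, l)) (args.attach.map fun t => atree t.1)
decreasing_by all_goals (simp_wf; have := List.sizeOf_lt_of_mem t.2; simp_all; omega)

/-- The measure on node constructors: variables are sent to a formal bottom
element `⊥` (here `none`) and `(f, l)` is sent to the trace `l`. -/
def atreeMeasure {F X : Type} : X ⊕ F × List F → Option (List F)
  | .inl _ => none
  | .inr (_, l) => some l

/-- The strict order on measures: `⊥` is strictly below every trace, and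
`l < l'` iff `l ⊋ l'` as sets (reverse strict inclusion of underlying sets). -/
def traceLT {F : Type} [DecidableEq F] : Option (List F) → Option (List F) → Prop
  | none, some _ => True
  | some l, some l' => l'.toFinset ⊂ l.toFinset
  | _, none => False

/-!
A head step `f(t̄₁,…,t̄ₙ)^l → t'[xᵢ←t̄ᵢ]^{l,f}` is, on trees, the grafting of the argument trees
`tree(t̄ᵢ)` (strict subtrees of the redex) into the tree of the body `t'`. Every node of that body
carries the trace `l,f`, whose underlying set strictly contains that of `l` because `f ∉ l`; so all
new constructors are measured strictly below the root `(f, l)`. Steps inside a context become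
expansions inside the same context.
-/

theorem atree_app {F X : Type} (f : F) (args : List (ATm F X)) (l : List F) :
    atree (.app f args l) = .node (.inr (f, l)) (args.map atree) := by
  rw [atree]; simp

def annSubPattern {F X V : Type} (σ : V → ATm F X) (l : List F) :
    Tm F V → Tree' (X ⊕ F × List F) (CTree (X ⊕ F × List F))
  | .var v => .leaf (atree (σ v))
  | .app g ts => .node (.inr (g, l)) (ts.attach.map fun t => annSubPattern σ l t.1)
decreasing_by all_goals (simp_wf; have := List.sizeOf_lt_of_mem t.2; simp_all; omega)

section annSubPattern

variable {F X V : Type} (σ : V → ATm F X) (l : List F)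

theorem annSub_app (g : F) (ts : List (Tm F V)) :
    annSub σ l (.app g ts) = .app g (ts.map (annSub σ l)) l := by
  rw [annSub]; simp

theorem annSubPattern_app (g : F) (ts : List (Tm F V)) :
    annSubPattern σ l (.app g ts) = .node (.inr (g, l)) (ts.map (annSubPattern σ l)) := by
  rw [annSubPattern]; simp

theorem graft_annSubPattern : ∀ t : Tm F V, graft (annSubPattern σ l t) = atree (annSub σ l t)
  | .var v => by rw [annSubPattern, annSub, graft]
  | .app g ts => by
      rw [annSubPattern_app, annSub_app, atree_app, graft]
      simp only [List.map_map, List.attach_map_val]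
      congr 1
      exact List.map_congr_left fun t ht => graft_annSubPattern t

theorem exists_eq_of_mem_leaves_annSubPattern :
    ∀ (t : Tm F V) (s : CTree (X ⊕ F × List F)),
      s ∈ (annSubPattern σ l t).leaves → ∃ v, s = atree (σ v)
  | .var v, s, hs => by rw [annSubPattern, Tree'.leaves, List.mem_singleton] at hs; exact ⟨v, hs⟩
  | .app g ts, s, hs => by
      simp only [annSubPattern_app, Tree'.leaves, List.mem_flatten, List.mem_map,
        List.mem_attach, true_and, Subtype.exists] at hs
      obtain ⟨_, ⟨_, ⟨t, ht, rfl⟩, rfl⟩, hst⟩ := hs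
      exact exists_eq_of_mem_leaves_annSubPattern t s hst

theorem atreeMeasure_of_mem_constrs_annSubPattern :
    ∀ (t : Tm F V) (c : X ⊕ F × List F),
      c ∈ (annSubPattern σ l t).constrs → atreeMeasure c = some l
  | .var v, c, hc => by rw [annSubPattern, Tree'.constrs] at hc; simp at hc
  | .app g ts, c, hc => by
      simp only [annSubPattern_app, Tree'.constrs, List.mem_cons, List.mem_flatten, List.mem_map,
        List.mem_attach, true_and, Subtype.exists] at hc
      obtain rfl | ⟨_, ⟨_, ⟨t, ht, rfl⟩, rfl⟩, hct⟩ := hc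
      · rfl
      · exact atreeMeasure_of_mem_constrs_annSubPattern t c hct

end annSubPattern

theorem isStrictSubtree_node_of_getElem? {N : Type} {c : N} {ts : List (CTree N)} {i : ℕ}
    {a : CTree N} (h : ts[i]? = some a) : IsStrictSubtree a (.node c ts) :=
  ⟨[i], List.cons_ne_nil _ _, .cons c ts i a a [] h (.nil a)⟩

theorem traceLT_append_singleton {F : Type} [DecidableEq F] {f : F} {l : List F} (hf : f ∉ l) :
    traceLT (some (l ++ [f])) (some l) := by
  show l.toFinset ⊂ (l ++ [f]).toFinset
  simpa [List.toFinset_append, Finset.union_comm] using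
    Finset.ssubset_insert (s := l.toFinset) (List.mem_toFinset.not.mpr hf)

theorem mExp_atree_annSub {F X V : Type} [DecidableEq F] {f : F} {args : List (ATm F X)}
    {l : List F} (hf : f ∉ l) (σ : V → ATm F X) (hσ : ∀ v, ∃ i : ℕ, args[i]? = some (σ v))
    (t : Tm F V) :
    MExp atreeMeasure traceLT (atree (.app f args l)) (atree (annSub σ (l ++ [f]) t)) := by
  rw [← graft_annSubPattern]
  refine .head _ _ (fun s hs => ?_) (fun c hc => ?_)
  · obtain ⟨v, rfl⟩ := exists_eq_of_mem_leaves_annSubPattern σ _ t s hs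
    obtain ⟨i, hi⟩ := hσ v
    rw [atree_app]
    exact isStrictSubtree_node_of_getElem? (by rw [List.getElem?_map, hi, Option.map_some])
  · rw [atreeMeasure_of_mem_constrs_annSubPattern σ _ t c hc, atree_app]
    exact traceLT_append_singleton hf

theorem annotated_step_is_measured_expansion_general
    {F X : Type} [DecidableEq F]
    (D : Env F) (t t' : ATm F X) (h : ARed D t t') :
    MExp atreeMeasure (traceLT (F := F)) (atree t) (atree t') := by
  induction h with
  | head f l args harity hf =>
    apply mExp_atree_annSub hf
    exact fun i => ⟨i, List.getElem?_eq_getElem _⟩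
  | congr f l pre post t t' _ ih =>
    simpa only [atree_app, List.map_append, List.map_cons] using .congr _ _ _ _ _ ih

/-- every annotated reduction step, translated to trees, is a
measured tree expansion with respect to the measure above. -/
theorem annotated_step_is_measured_expansion
    {F X : Type} [Fintype F] [DecidableEq F] [Countable X]
    (D : Env F) (t t' : ATm F X) (h : ARed D t t') :
    MExp atreeMeasure (traceLT (F := F)) (atree t) (atree t') :=
  annotated_step_is_measured_expansion_general D t t' h
end

section
/- (Trace rewinding.) Let t̄ be a reachable annotated term whose outermost trace has the form l,f' (its trace is the list l extended with a final element f'), and let (f'(x₁,…,xₙ) = t_{f'}) ∈ D. Then there exist annotated terms ū₁,…,ūₙ and a context C such that the annotated term f'(ū₁,…,ūₙ)^l reduces in one annotated step to t_{f'}[x₁←ū₁,…,xₙ←ūₙ]^{l,f'}, which reduces in zero or more annotated steps to C[t̄]; in particular f'(ū₁,…,ūₙ)^l reduces to a term containing t̄ in a nonempty annotated reduction sequence. -/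
section Aux

variable {F X V : Type}

lemma annSub_app_s9 (σ : V → ATm F X) (L : List F) (f : F) (ts : List (Tm F V)) :
    annSub σ L (.app f ts) = .app f (ts.attach.map fun t => annSub σ L t.1) L := by
  rw [annSub]

lemma annSub_var (σ : V → ATm F X) (L : List F) (v : V) :
    annSub σ L (.var v) = σ v := by
  rw [annSub]

lemma asubtm_trans {a b c : ATm F X} (h1 : ASubtm a b) (h2 : ASubtm b c) : ASubtm a c := by
  induction h2 with
  | refl => exact h1
  | arg u f args l hm hs ih => exact ASubtm.arg _ _ _ _ _ hm ih

lemma asubtm_var {s : ATm F X} {v : X} (h : ASubtm s (.var v)) : s = .var v := by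
  cases h with
  | refl => rfl

lemma asubtm_app_inv {s : ATm F X} {f : F} {args : List (ATm F X)} {l : List F}
    (h : ASubtm s (.app f args l)) :
    s = .app f args l ∨ ∃ u ∈ args, ASubtm s u := by
  cases h with
  | refl => exact Or.inl rfl
  | arg u hm hs => exact Or.inr ⟨u, by assumption, by assumption⟩

lemma ared_cases {D : Env F} {a b : ATm F X} (h : ARed D a b) :
    (∃ (f : F) (l : List F) (args : List (ATm F X)) (hh : args.length = D.arity f),
      f ∉ l ∧ a = .app f args l ∧
      b = annSub (fun i => args.get (Fin.cast hh.symm i)) (l ++ [f]) (D.body f))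
    ∨ (∃ (f : F) (l : List F) (pre post : List (ATm F X)) (t t' : ATm F X),
      ARed D t t' ∧ a = .app f (pre ++ t :: post) l ∧ b = .app f (pre ++ t' :: post) l) := by
  cases h with
  | head f l args hh hn => exact Or.inl ⟨f, l, args, hh, hn, rfl, rfl⟩
  | congr f l pre post t t' ht => exact Or.inr ⟨f, l, pre, post, t, t', ht, rfl, rfl⟩

lemma mem_annSub (σ : V → ATm F X) (L : List F) {ts : List (Tm F V)} {u : Tm F V}
    (h : u ∈ ts) : annSub σ L u ∈ ts.attach.map (fun t => annSub σ L t.1) :=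
  List.mem_map.2 ⟨⟨u, h⟩, List.mem_attach _ _, rfl⟩

lemma annSub_mono {σ : V → ATm F X} {L : List F} {u' u : Tm F V} (h : Subtm u' u) :
    ASubtm (annSub σ L u') (annSub σ L u) := by
  induction h with
  | refl => exact ASubtm.refl _
  | arg u0 f ts hm hs ih =>
      rw [annSub_app_s9]
      exact ASubtm.arg _ _ _ _ _ (mem_annSub σ L hm) ih

lemma annSub_subtm {σ : V → ATm F X} {L : List F} {s w : ATm F X}
    (h : ASubtm s w) : ∀ u : Tm F V, w = annSub σ L u →
    (∃ v, ASubtm s (σ v)) ∨ ∃ u', Subtm u' u ∧ s = annSub σ L u' := by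
  induction h with
  | refl => exact fun u hu => Or.inr ⟨u, Subtm.refl u, hu⟩
  | arg x f args l hm hs ih =>
      intro u hu
      cases u with
      | var v =>
          refine Or.inl ⟨v, ?_⟩
          rw [annSub_var] at hu
          rw [← hu]
          exact ASubtm.arg _ x f args l hm hs
      | app f0 ts0 =>
          rw [annSub_app_s9] at hu
          injection hu with h1 h2 h3
          subst h1; subst h3
          rw [h2] at hm
          obtain ⟨⟨u0, hu0⟩, -, rfl⟩ := List.mem_map.1 hm
          rcases ih u0 rfl with h1 | ⟨u', hu', rfl⟩
          · exact Or.inl h1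
          · exact Or.inr ⟨u', Subtm.arg _ _ _ _ hu0 hu', rfl⟩

lemma ared_lift {D : Env F} {s w s' : ATm F X} (hsub : ASubtm s w) (hred : ARed D s s') :
    ∃ w', ARed D w w' ∧ ASubtm s' w' := by
  induction hsub with
  | refl => exact ⟨s', hred, ASubtm.refl _⟩
  | arg u f args l hm hs ih =>
      obtain ⟨u', hu1, hu2⟩ := ih
      obtain ⟨pre, post, rfl⟩ := List.append_of_mem hm
      exact ⟨.app f (pre ++ u' :: post) l, ARed.congr f l pre post u u' hu1,
        ASubtm.arg _ u' f _ l (by simp) hu2⟩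

lemma step_subtm {D : Env F} {w w' : ATm F X} (hred : ARed D w w') :
    ∀ s : ATm F X, ASubtm s w' →
    ASubtm s w
    ∨ (∃ s₀, ASubtm s₀ w ∧ ARed D s₀ s)
    ∨ (∃ (f : F) (args : List (ATm F X)) (l₀ : List F) (h : args.length = D.arity f),
        f ∉ l₀ ∧ ASubtm (ATm.app f args l₀) w ∧
        ASubtm s (annSub (fun i => args.get (Fin.cast h.symm i)) (l₀ ++ [f]) (D.body f))) := by
  induction hred with
  | head f l args h hn =>
      intro s hsub
      exact Or.inr (Or.inr ⟨f, args, l, h, hn, ASubtm.refl _, hsub⟩)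
  | congr f l pre post t t' ht ih =>
      intro s hsub
      rcases asubtm_app_inv hsub with rfl | ⟨u, hm, hs⟩
      · exact Or.inr (Or.inl ⟨_, ASubtm.refl _, ARed.congr f l pre post t t' ht⟩)
      · rcases List.mem_append.1 hm with hpre | hm2
        · exact Or.inl (ASubtm.arg _ _ _ _ _ (List.mem_append.2 (Or.inl hpre)) hs)
        · rcases List.mem_cons.1 hm2 with rfl | hpost
          · rcases ih s hs with h1 | ⟨s0, h1, h2⟩ | ⟨f3, args3, l3, h3, hn3, hsub3, hs3⟩
            · exact Or.inl (ASubtm.arg _ _ _ _ _ (by simp) h1)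
            · exact Or.inr (Or.inl ⟨s0, ASubtm.arg _ _ _ _ _ (by simp) h1, h2⟩)
            · exact Or.inr (Or.inr ⟨f3, args3, l3, h3, hn3,
                ASubtm.arg _ _ _ _ _ (by simp) hsub3, hs3⟩)
          · exact Or.inl (ASubtm.arg _ _ _ _ _ (by simp [hpost]) hs)

end Aux

lemma main_inv {F X : Type} {D : Env F} {t : Tm F X} {w : ATm F X}
    (hw : Relation.ReflTransGen (ARed D) (annInit t) w) :
    ∀ (g f' : F) (ts : List (ATm F X)) (l : List F),
      ASubtm (ATm.app g ts (l ++ [f'])) w →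
      ∃ (us : List (ATm F X)) (h : us.length = D.arity f') (w' : ATm F X),
        ARed D (ATm.app f' us l)
            (annSub (fun i => us.get (Fin.cast h.symm i)) (l ++ [f']) (D.body f')) ∧
        Relation.ReflTransGen (ARed D)
            (annSub (fun i => us.get (Fin.cast h.symm i)) (l ++ [f']) (D.body f')) w' ∧
        ASubtm (ATm.app g ts (l ++ [f'])) w' := by
  induction hw with
  | refl =>
      intro g f' ts l hsub
      rcases annSub_subtm hsub t rfl with ⟨v, hv⟩ | ⟨u', hu', heq⟩
      · exact absurd (asubtm_var hv) (by simp)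
      · cases u' with
        | var v =>
            rw [annSub_var] at heq
            exact absurd heq (by simp)
        | app f0 ts0 =>
            rw [annSub_app_s9] at heq
            injection heq with e1 e2 e3
            simp at e3
  | tail hab hbc ih =>
      intro g f' ts l hsub
      rcases step_subtm hbc _ hsub with h1 | ⟨s0, hs0, hst⟩ |
        ⟨f, args, l0, h, hn, hsubr, hsc⟩
      · exact ih g f' ts l h1
      · rcases ared_cases hst with ⟨fh, lh, argsh, hh, hnh, rfl, heq⟩ |
          ⟨fc, lc, pre, post, t0, t0', ht0, rfl, heq⟩
        · -- B, head step: s is the contractum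
          cases hb : D.body fh with
          | var v =>
              rw [hb, annSub_var] at heq
              refine ih g f' ts l (asubtm_trans ?_ hs0)
              rw [heq]
              exact ASubtm.arg _ _ fh argsh lh (List.get_mem _ _) (ASubtm.refl _)
          | app gb tsb =>
              have heq0 := heq
              rw [hb, annSub_app_s9] at heq
              injection heq with e1 e2 e3
              obtain ⟨rfl, e5⟩ := List.append_inj' e3 rfl
              obtain rfl : f' = fh := by injection e5
              refine ⟨argsh, hh, _, ARed.head f' l argsh hh hnh,
                Relation.ReflTransGen.refl, ?_⟩
              rw [heq0]
              exact ASubtm.refl _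
        · -- B, congr step
          have heq0 := heq
          injection heq with e1 e2 e3
          subst e3
          obtain ⟨us, h, w2, r1, r2, r3⟩ := ih fc f' (pre ++ t0 :: post) l hs0
          obtain ⟨w3, hw3, hsub3⟩ :=
            ared_lift r3 (ARed.congr fc (l ++ [f']) pre post t0 t0' ht0)
          refine ⟨us, h, w3, r1, r2.tail hw3, ?_⟩
          rw [heq0]
          exact hsub3
      · -- C: s inside a contractum
        rcases annSub_subtm hsc (D.body f) rfl with ⟨v, hv⟩ | ⟨u', hu', heq⟩
        · refine ih g f' ts l (asubtm_trans (asubtm_trans hv ?_) hsubr)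
          exact ASubtm.arg _ _ f args l0 (List.get_mem _ _) (ASubtm.refl _)
        · cases u' with
          | var v =>
              rw [annSub_var] at heq
              refine ih g f' ts l (asubtm_trans ?_ hsubr)
              rw [heq]
              exact ASubtm.arg _ _ f args l0 (List.get_mem _ _) (ASubtm.refl _)
          | app gb tsb =>
              have heq0 := heq
              rw [annSub_app_s9] at heq
              injection heq with e1 e2 e3
              obtain ⟨rfl, e5⟩ := List.append_inj' e3 rfl
              obtain rfl : f' = f := by injection e5
              refine ⟨args, h, _, ARed.head f' l args h hn,
                Relation.ReflTransGen.refl, ?_⟩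
              rw [heq0]
              exact annSub_mono hu'
/-- trace rewinding: if a reachable annotated term has outermost
trace `l, f'`, then there are arguments `ū₁,…,ūₙ` and a surrounding context
such that `f'(ū₁,…,ūₙ)^l` reduces in one annotated step to the annotated
substitution of the body of `f'`, which reduces in zero or more annotated
steps to a term containing the given term as a subterm. -/
theorem trace_rewinding
    {F X : Type} [Finite F] [Countable X] (D : Env F)
    (g f' : F) (ts : List (ATm F X)) (l : List F)
    (hreach : Reachable D (ATm.app g ts (l ++ [f']))) :
    ∃ (us : List (ATm F X)) (h : us.length = D.arity f') (w : ATm F X),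
      ARed D (ATm.app f' us l)
          (annSub (fun i => us.get (Fin.cast h.symm i)) (l ++ [f']) (D.body f')) ∧
      Relation.ReflTransGen (ARed D)
          (annSub (fun i => us.get (Fin.cast h.symm i)) (l ++ [f']) (D.body f')) w ∧
      ASubtm (ATm.app g ts (l ++ [f'])) w := by

  obtain ⟨t, w, hw, hsub⟩ := hreach
  exact main_inv hw g f' ts l hsub
end

section
/- (Self-repeating calls diverge.) In the first-order calculus with recursive definitions, let f be a function name of arity n. If for fresh distinct variables x₁,…,xₙ the term f(x₁,…,xₙ) β-reduces in one or more steps to a term containing a subterm of the form f(s₁,…,sₙ), then for all terms u₁,…,uₙ the term f(u₁,…,uₙ) admits an infinite β-reduction sequence. -/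
section Aux

variable {F X V W : Type}

/-- Custom structural induction for `Tm`. -/
theorem Tm.my_ind {motive : Tm F X → Prop}
    (hv : ∀ x, motive (.var x))
    (ha : ∀ f ts, (∀ t ∈ ts, motive t) → motive (.app f ts)) :
    ∀ t, motive t
  | .var x => hv x
  | .app f ts => ha f ts (fun t _ => Tm.my_ind hv ha t)
decreasing_by all_goals (simp_wf; have := List.sizeOf_lt_of_mem ‹t ∈ ts›; omega)

theorem subst_var (σ : V → Tm F X) (v : V) : subst σ (.var v) = σ v := by
  rw [subst]

theorem subst_app (σ : V → Tm F X) (f : F) (ts : List (Tm F V)) :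
    subst σ (.app f ts) = .app f (ts.map (subst σ)) := by
  rw [subst]
  simp [List.attach_map_val]

theorem subst_subst (σ : V → Tm F X) (τ : W → Tm F V) (t : Tm F W) :
    subst σ (subst τ t) = subst (fun v => subst σ (τ v)) t := by
  induction t using Tm.my_ind with
  | hv x => simp [subst_var]
  | ha f ts ih =>
    simp only [subst_app, List.map_map]
    congr 1
    exact List.map_congr_left fun t ht => ih t ht

theorem Beta.subst_stable {D : Env F} {t t' : Tm F V} (σ : V → Tm F X)
    (h : Beta D t t') : Beta D (subst σ t) (subst σ t') := by
  induction h with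
  | head f args harr =>
    have h' : (args.map (subst σ)).length = D.arity f := by simp [harr]
    have key := Beta.head (D := D) f (args.map (subst σ)) h'
    rw [subst_app, subst_subst]
    convert key using 2
    funext i
    simp [List.get_eq_getElem]
  | congr f pre post t t' _ ih =>
    simp only [subst_app, List.map_append, List.map_cons]
    exact Beta.congr f _ _ _ _ ih

theorem Subtm.subst_stable {s w : Tm F V} (σ : V → Tm F X)
    (h : Subtm s w) : Subtm (subst σ s) (subst σ w) := by
  induction h with
  | refl => exact Subtm.refl _
  | arg u f args hu _ ih =>
    rw [subst_app]
    exact Subtm.arg _ _ f _ (List.mem_map_of_mem hu) ih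

theorem TransGen.beta_subst {D : Env F} {t t' : Tm F V} (σ : V → Tm F X)
    (h : Relation.TransGen (Beta D) t t') :
    Relation.TransGen (Beta D) (subst σ t) (subst σ t') := by
  induction h with
  | single h => exact Relation.TransGen.single (h.subst_stable σ)
  | tail _ h ih => exact ih.tail (h.subst_stable σ)

/-- Lift a single beta step at a subterm to the whole term. -/
theorem beta_lift {D : Env F} {s w s' : Tm F X} (hsub : Subtm s w)
    (h : Beta D s s') : ∃ w', Beta D w w' ∧ Subtm s' w' := by
  induction hsub with
  | refl => exact ⟨s', h, Subtm.refl _⟩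
  | arg u f args hu _ ih =>
    obtain ⟨u', hbu, hsu⟩ := ih
    obtain ⟨pre, post, rfl⟩ := List.append_of_mem hu
    exact ⟨.app f (pre ++ u' :: post), Beta.congr f pre post _ _ hbu,
      Subtm.arg _ _ f _ (by simp) hsu⟩

theorem beta_lift_trans {D : Env F} {s w s' : Tm F X} (hsub : Subtm s w)
    (h : Relation.TransGen (Beta D) s s') :
    ∃ w', Relation.TransGen (Beta D) w w' ∧ Subtm s' w' := by
  induction h with
  | single h =>
    obtain ⟨w', hb, hs⟩ := beta_lift hsub h
    exact ⟨w', Relation.TransGen.single hb, hs⟩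
  | tail _ h ih =>
    obtain ⟨wm, hbm, hsm⟩ := ih
    obtain ⟨w', hb, hs⟩ := beta_lift hsm h
    exact ⟨w', hbm.tail hb, hs⟩

theorem infinite_of_step {α : Type} {r : α → α → Prop} {Q : α → Prop}
    (step : ∀ t, Q t → ∃ t', r t t' ∧ Q t') {t0 : α} (h0 : Q t0) :
    ∃ seq : ℕ → α, seq 0 = t0 ∧ ∀ n, r (seq n) (seq (n + 1)) := by
  choose nxt hr hQ using step
  let g : ℕ → {t // Q t} := fun n =>
    Nat.rec ⟨t0, h0⟩ (fun _ p => ⟨nxt p.1 p.2, hQ p.1 p.2⟩) n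
  exact ⟨fun n => (g n).1, rfl, fun n => hr _ _⟩

theorem infinite_of_transgen_step {α : Type} {r : α → α → Prop} {R : α → Prop}
    (step : ∀ t, R t → ∃ t', Relation.TransGen r t t' ∧ R t') {t0 : α} (h0 : R t0) :
    ∃ seq : ℕ → α, seq 0 = t0 ∧ ∀ n, r (seq n) (seq (n + 1)) := by
  set Q : α → Prop := fun t => ∃ t', Relation.ReflTransGen r t t' ∧ R t' with hQ
  have step' : ∀ t, Q t → ∃ t', r t t' ∧ Q t' := by
    intro t ⟨t', htt', hR⟩
    rcases htt'.cases_head with rfl | ⟨m, hm, hmt'⟩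
    · obtain ⟨t'', htrans, hR'⟩ := step _ hR
      obtain ⟨m, hm, hmt''⟩ := Relation.TransGen.head'_iff.mp htrans
      exact ⟨m, hm, t'', hmt'', hR'⟩
    · exact ⟨m, hm, t', hmt', hR⟩
  exact infinite_of_step step' ⟨t0, Relation.ReflTransGen.refl, h0⟩

theorem Subtm.trans {F X : Type} {a b c : Tm F X} (h1 : Subtm a b) (h2 : Subtm b c) :
    Subtm a c := by
  induction h2 with
  | refl => exact h1
  | arg u f args hu _ ih => exact Subtm.arg _ _ f _ hu ih

end Aux

/-- self-repeating calls diverge: if for fresh distinct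
variables `x₁,…,xₙ` the term `f(x₁,…,xₙ)` β-reduces in one or more steps to a
term containing a subterm `f(s₁,…,sₙ)`, then for all terms `u₁,…,uₙ` the term
`f(u₁,…,uₙ)` admits an infinite β-reduction sequence. -/
theorem self_repeating_calls_diverge
    {F X : Type} [Finite F] [Countable X] (D : Env F) (f : F)
    (xs : Fin (D.arity f) → X) (hinj : Function.Injective xs)
    (w : Tm F X) (ss : List (Tm F X)) (hss : ss.length = D.arity f)
    (hred : Relation.TransGen (Beta D)
        (Tm.app f (List.ofFn fun i => Tm.var (xs i))) w)
    (hsub : Subtm (Tm.app f ss) w) :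
    ∀ us : List (Tm F X), us.length = D.arity f →
      ∃ seq : ℕ → Tm F X, seq 0 = Tm.app f us ∧
        ∀ n, Beta D (seq n) (seq (n + 1)) := by
  intro us hus
  classical
  have key : ∀ vs : List (Tm F X), vs.length = D.arity f →
      ∃ vs' : List (Tm F X), vs'.length = D.arity f ∧
        ∃ w', Relation.TransGen (Beta D) (Tm.app f vs) w' ∧ Subtm (Tm.app f vs') w' := by
    intro vs hvs
    set σ : X → Tm F X :=
      Function.extend xs (fun i => vs.get (Fin.cast hvs.symm i)) Tm.var with hσ
    have hσxs : ∀ i, σ (xs i) = vs.get (Fin.cast hvs.symm i) := fun i =>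
      hinj.extend_apply _ _ i
    have hstart : subst σ (Tm.app f (List.ofFn fun i => Tm.var (xs i))) = Tm.app f vs := by
      rw [subst_app]
      congr 1
      rw [List.map_ofFn]
      apply List.ext_get (by simp [hvs])
      intro n h1 h2
      simp [Function.comp, subst_var, hσxs]
    have hred' := TransGen.beta_subst σ hred
    rw [hstart] at hred'
    have hsub' := hsub.subst_stable σ
    rw [subst_app] at hsub'
    exact ⟨ss.map (subst σ), by simp [hss], subst σ w, hred', hsub'⟩
  have step : ∀ t : Tm F X,
      (∃ vs : List (Tm F X), vs.length = D.arity f ∧ Subtm (Tm.app f vs) t) →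
      ∃ t', Relation.TransGen (Beta D) t t' ∧
        ∃ vs : List (Tm F X), vs.length = D.arity f ∧ Subtm (Tm.app f vs) t' := by
    rintro t ⟨vs, hvs, hsubt⟩
    obtain ⟨vs', hvs', w', htrans, hsub'⟩ := key vs hvs
    obtain ⟨t', ht', hsubt'⟩ := beta_lift_trans hsubt htrans
    exact ⟨t', ht', vs', hvs', hsub'.trans hsubt'⟩
  exact infinite_of_transgen_step step ⟨us, hus, Subtm.refl _⟩
end

section
/- (Closed-higher-order correctness.) For every definition environment D over a finite set F of function names, annotated reduction in the closed-higher-order calculus is strongly normalizing: there is no infinite sequence t̄₀ → t̄₁ → t̄₂ → ⋯ of annotated reduction steps. -/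
/-- Closed-higher-order terms: variables, first-class function names, and
applications `t(t₁,…,tₙ)`. -/
inductive HTm (F : Type) (X : Type) : Type where
  | var : X → HTm F X
  | fn : F → HTm F X
  | app : HTm F X → List (HTm F X) → HTm F X

/-- Annotated closed-higher-order terms: each application node carries a trace. -/
inductive HATm (F : Type) (X : Type) : Type where
  | var : X → HATm F X
  | fn : F → HATm F X
  | app : HATm F X → List (HATm F X) → List F → HATm F X

/-- A definition environment for the closed-higher-order calculus. -/
structure HEnv (F : Type) where
  arity : F → ℕ
  body : (f : F) → HTm F (Fin (arity f))

/-- The annotating substitution `t[σ]^l`: annotate every application node of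
`t` with the trace `l` and replace every variable `x` by `σ x`. -/
def hAnnSub {F X V : Type} (σ : V → HATm F X) (l : List F) : HTm F V → HATm F X
  | .var v => σ v
  | .fn f => .fn f
  | .app t ts => .app (hAnnSub σ l t) (ts.attach.map fun u => hAnnSub σ l u.1) l
decreasing_by all_goals (simp_wf; first | omega | (have := List.sizeOf_lt_of_mem u.2; omega))

/-- Ordinary substitution on unannotated closed-higher-order terms. -/
def hSubst {F X V : Type} (σ : V → HTm F X) : HTm F V → HTm F X
  | .var v => σ v
  | .fn f => .fn f
  | .app t ts => .app (hSubst σ t) (ts.attach.map fun u => hSubst σ u.1)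
decreasing_by all_goals (simp_wf; first | omega | (have := List.sizeOf_lt_of_mem u.2; omega))

/-- Erasure: delete all traces. -/
def hErase {F X : Type} : HATm F X → HTm F X
  | .var x => .var x
  | .fn f => .fn f
  | .app t ts _ => .app (hErase t) (ts.attach.map fun u => hErase u.1)
decreasing_by all_goals (simp_wf; first | omega | (have := List.sizeOf_lt_of_mem u.2; omega))

/-- One step of annotated reduction in the closed-higher-order calculus. -/
inductive HARed {F X : Type} (D : HEnv F) : HATm F X → HATm F X → Prop where
  | head : ∀ (f : F) (l : List F) (args : List (HATm F X))
      (h : args.length = D.arity f), f ∉ l →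
      HARed D (.app (.fn f) args l)
        (hAnnSub (fun i => args.get (Fin.cast h.symm i)) (l ++ [f]) (D.body f))
  | congrFn : ∀ (t t' : HATm F X) (args : List (HATm F X)) (l : List F),
      HARed D t t' → HARed D (.app t args l) (.app t' args l)
  | congrArg : ∀ (u : HATm F X) (pre post : List (HATm F X)) (l : List F)
      (t t' : HATm F X), HARed D t t' →
      HARed D (.app u (pre ++ t :: post) l) (.app u (pre ++ t' :: post) l)

/-- One step of β-reduction in the closed-higher-order calculus. -/
inductive HBeta {F X : Type} (D : HEnv F) : HTm F X → HTm F X → Prop where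
  | head : ∀ (f : F) (args : List (HTm F X)) (h : args.length = D.arity f),
      HBeta D (.app (.fn f) args)
        (hSubst (fun i => args.get (Fin.cast h.symm i)) (D.body f))
  | congrFn : ∀ (t t' : HTm F X) (args : List (HTm F X)),
      HBeta D t t' → HBeta D (.app t args) (.app t' args)
  | congrArg : ∀ (u : HTm F X) (pre post : List (HTm F X)) (t t' : HTm F X),
      HBeta D t t' →
      HBeta D (.app u (pre ++ t :: post)) (.app u (pre ++ t' :: post))

/-- Subterm relation on annotated closed-higher-order terms. -/
inductive HASubtm {F X : Type} : HATm F X → HATm F X → Prop where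
  | refl : ∀ t, HASubtm t t
  | fn : ∀ (s t : HATm F X) (args : List (HATm F X)) (l : List F),
      HASubtm s t → HASubtm s (.app t args l)
  | arg : ∀ (s u t : HATm F X) (args : List (HATm F X)) (l : List F),
      u ∈ args → HASubtm s u → HASubtm s (.app t args l)

/-- `t[∅]^∅`: annotate with empty traces everywhere. -/
def hAnnInit {F X : Type} (t : HTm F X) : HATm F X := hAnnSub (fun x => .var x) [] t

/-- Contains a blocked redex: a subterm `f(…)^l` with `f ∈ l`. -/
def HHasBlockedRedex {F X : Type} (t : HATm F X) : Prop :=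
  ∃ (f : F) (args : List (HATm F X)) (l : List F),
    HASubtm (.app (.fn f) args l) t ∧ f ∈ l

------------------------------------------------------------------------
-- auxiliary development

section SN
variable {F X V : Type}

/-- node count of an unannotated term -/
def hsize : HTm F V → ℕ
  | .var _ => 1
  | .fn _ => 1
  | .app t ts => 1 + hsize t + (ts.attach.map fun u => hsize u.1).sum
decreasing_by all_goals (simp_wf; first | omega | (have := List.sizeOf_lt_of_mem u.2; omega))

/-- sum of g over variable occurrences -/
def vSum (g : V → ℕ) : HTm F V → ℕ
  | .var v => g v
  | .fn _ => 0
  | .app t ts => vSum g t + (ts.attach.map fun u => vSum g u.1).sum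
decreasing_by all_goals (simp_wf; first | omega | (have := List.sizeOf_lt_of_mem u.2; omega))

/-- the measure, parameterized by a coefficient function on traces -/
def hm (c : List F → ℕ) : HATm F X → ℕ
  | .var _ => 1
  | .fn _ => 1
  | .app t ts l => c l * (1 + hm c t + (ts.attach.map fun u => hm c u.1).sum)
decreasing_by all_goals (simp_wf; first | omega | (have := List.sizeOf_lt_of_mem u.2; omega))

@[simp] lemma hAnnSub_var (σ : V → HATm F X) (l : List F) (v : V) :
    hAnnSub σ l (.var v) = σ v := by rw [hAnnSub]

@[simp] lemma hAnnSub_fn (σ : V → HATm F X) (l : List F) (f : F) :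
    hAnnSub σ l (.fn f : HTm F V) = .fn f := by rw [hAnnSub]

@[simp] lemma hAnnSub_app (σ : V → HATm F X) (l : List F) (t : HTm F V)
    (ts : List (HTm F V)) :
    hAnnSub σ l (.app t ts) = .app (hAnnSub σ l t) (ts.map (hAnnSub σ l)) l := by
  rw [hAnnSub, List.attach_map_val]

@[simp] lemma hsize_var (v : V) : hsize (.var v : HTm F V) = 1 := by rw [hsize]
@[simp] lemma hsize_fn (f : F) : hsize (.fn f : HTm F V) = 1 := by rw [hsize]
@[simp] lemma hsize_app (t : HTm F V) (ts : List (HTm F V)) :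
    hsize (.app t ts) = 1 + hsize t + (ts.map hsize).sum := by
  rw [hsize, List.attach_map_val]

@[simp] lemma vSum_var (g : V → ℕ) (v : V) : vSum g (.var v : HTm F V) = g v := by rw [vSum]
@[simp] lemma vSum_fn (g : V → ℕ) (f : F) : vSum g (.fn f : HTm F V) = 0 := by rw [vSum]
@[simp] lemma vSum_app (g : V → ℕ) (t : HTm F V) (ts : List (HTm F V)) :
    vSum g (.app t ts) = vSum g t + (ts.map (vSum g)).sum := by
  rw [vSum, List.attach_map_val]

@[simp] lemma hm_var (c : List F → ℕ) (v : X) : hm c (.var v : HATm F X) = 1 := by rw [hm]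
@[simp] lemma hm_fn (c : List F → ℕ) (f : F) : hm c (.fn f : HATm F X) = 1 := by rw [hm]
@[simp] lemma hm_app (c : List F → ℕ) (t : HATm F X) (ts : List (HATm F X)) (l : List F) :
    hm c (.app t ts l) = c l * (1 + hm c t + (ts.map (hm c)).sum) := by
  rw [hm, List.attach_map_val]

/-- custom induction -/
lemma HTm.ind2 {motive : HTm F V → Prop}
    (hvar : ∀ v, motive (.var v)) (hfn : ∀ f, motive (.fn f))
    (happ : ∀ t ts, motive t → (∀ u ∈ ts, motive u) → motive (.app t ts)) :
    ∀ t, motive t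
  | .var v => hvar v
  | .fn f => hfn f
  | .app t ts => happ t ts (HTm.ind2 hvar hfn happ t)
      (fun u hu => HTm.ind2 hvar hfn happ u)
decreasing_by all_goals (simp_wf; first | omega | (have := List.sizeOf_lt_of_mem hu; omega))

lemma one_le_hm (c : List F → ℕ) (hc : ∀ l, 1 ≤ c l) (t : HATm F X) : 1 ≤ hm c t := by
  cases t with
  | var v => simp
  | fn f => simp
  | app t ts l =>
    simp only [hm_app]
    have := hc l
    nlinarith [Nat.zero_le (hm c t + (ts.map (hm c)).sum)]

lemma list_sum_le_mul {α : Type} (M : ℕ) (g b : α → ℕ) :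
    ∀ (ts : List α), (∀ u ∈ ts, g u ≤ M * b u) →
      (ts.map g).sum ≤ M * (ts.map b).sum := by
  intro ts h
  induction ts with
  | nil => simp
  | cons a ts ih =>
    simp only [List.map_cons, List.sum_cons, Nat.mul_add]
    exact Nat.add_le_add (h a (by simp)) (ih fun u hu => h u (by simp [hu]))

lemma map_add_sum {α : Type} (ts : List α) (f g : α → ℕ) :
    (ts.map (fun u => f u + g u)).sum = (ts.map f).sum + (ts.map g).sum := by
  induction ts with
  | nil => simp
  | cons a ts ih => simp [ih]; omega

/-- key substitution bound -/
lemma hm_hAnnSub_le (c : List F → ℕ) (hc : ∀ l, 1 ≤ c l)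
    (σ : V → HATm F X) (L : List F) (s : HTm F V) :
    hm c (hAnnSub σ L s) ≤ (c L) ^ (hsize s) * (hsize s + vSum (fun v => hm c (σ v)) s) := by
  induction s using HTm.ind2 with
  | hvar v =>
    simp only [hAnnSub_var, hsize_var, vSum_var, pow_one]
    have h1 := hc L
    nlinarith [Nat.zero_le (hm c (σ v))]
  | hfn f =>
    simp only [hAnnSub_fn, hsize_fn, vSum_fn, hm_fn, pow_one]
    have := hc L
    omega
  | happ t ts iht ihts =>
    simp only [hAnnSub_app, hm_app, hsize_app, vSum_app]
    set C := c L with hC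
    have hC1 : 1 ≤ C := hc L
    -- total exponent
    set E := 1 + hsize t + (ts.map hsize).sum with hE
    have hpow : ∀ (s' : ℕ), s' ≤ E → C ^ s' ≤ C ^ E := fun s' hs =>
      Nat.pow_le_pow_right hC1 hs
    -- bound each piece by C^(E-1) * _
    have hE1 : 1 ≤ E := by omega
    have ht' : hm c (hAnnSub σ L t) ≤ C ^ (E-1) * (hsize t + vSum (fun v => hm c (σ v)) t) := by
      calc hm c (hAnnSub σ L t) ≤ C ^ hsize t * (hsize t + vSum (fun v => hm c (σ v)) t) := iht
        _ ≤ C ^ (E-1) * (hsize t + vSum (fun v => hm c (σ v)) t) :=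
          Nat.mul_le_mul_right _ (Nat.pow_le_pow_right hC1 (by omega))
    have hts' : ((ts.map (hAnnSub σ L)).map (hm c)).sum ≤
        C ^ (E-1) * ((ts.map (fun u => hsize u + vSum (fun v => hm c (σ v)) u)).sum) := by
      rw [List.map_map]
      have := list_sum_le_mul (C ^ (E-1)) (fun u => hm c (hAnnSub σ L u))
        (fun u => hsize u + vSum (fun v => hm c (σ v)) u) ts (fun u hu => by
          calc hm c (hAnnSub σ L u) ≤ C ^ hsize u * (hsize u + vSum (fun v => hm c (σ v)) u) :=
              ihts u hu
            _ ≤ C ^ (E-1) * _ := Nat.mul_le_mul_right _ (Nat.pow_le_pow_right hC1 (by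
                have : hsize u ≤ (ts.map hsize).sum :=
                  List.single_le_sum (fun _ _ => Nat.zero_le _) _ (List.mem_map_of_mem hu)
                omega)))
      simpa [Function.comp_def] using this
    have hsum : (ts.map (fun u => hsize u + vSum (fun v => hm c (σ v)) u)).sum =
        (ts.map hsize).sum + (ts.map (vSum (fun v => hm c (σ v)))).sum :=
      map_add_sum ts _ _
    rw [hsum] at hts'
    have hCE : C * C ^ (E-1) = C ^ E := by
      rw [← pow_succ']
      congr 1
      omega
    set St := hsize t
    set Ss := (ts.map hsize).sum
    set Vt := vSum (fun v => hm c (σ v)) t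
    set Vs := (ts.map (vSum (fun v => hm c (σ v)))).sum
    have hone : 1 ≤ C ^ (E-1) := Nat.one_le_pow _ _ (by omega)
    calc C * (1 + hm c (hAnnSub σ L t) + ((ts.map (hAnnSub σ L)).map (hm c)).sum)
        ≤ C * (C ^ (E-1) * 1 + C ^ (E-1) * (St + Vt) + C ^ (E-1) * (Ss + Vs)) := by
          apply Nat.mul_le_mul_left
          omega
      _ = C ^ E * (1 + St + Ss + (Vt + Vs)) := by rw [← Nat.mul_add, ← Nat.mul_add, ← Nat.mul_assoc, hCE]; ring
      _ = C ^ E * (E + (Vt + Vs)) := by rw [hE]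

lemma vSum_le (g : V → ℕ) (M : ℕ) (hg : ∀ v, g v ≤ M) (s : HTm F V) :
    vSum g s ≤ hsize s * M := by
  induction s using HTm.ind2 with
  | hvar v => simpa using hg v
  | hfn f => simp
  | happ t ts iht ihts =>
    simp only [vSum_app, hsize_app]
    have h2 : (ts.map (vSum g)).sum ≤ M * (ts.map hsize).sum :=
      list_sum_le_mul M _ _ ts (fun u hu => by
        rw [Nat.mul_comm]; exact ihts u hu)
    have h3 : (1 + hsize t + (ts.map hsize).sum) * M
        = M + hsize t * M + M * (ts.map hsize).sum := by ring
    omega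

end SN

section Main
variable {F X : Type}

lemma head_lt (D : HEnv F) (B : ℕ) (hB : 1 ≤ B) (hBsz : ∀ f, hsize (D.body f) ≤ B)
    (c : List F → ℕ) (hc2 : ∀ l, 2 ≤ c l)
    (f : F) (l : List F) (args : List (HATm F X)) (h : args.length = D.arity f)
    (hstep : c l = B * (c (l ++ [f])) ^ B) :
    hm c (hAnnSub (fun i => args.get (Fin.cast h.symm i)) (l ++ [f]) (D.body f))
      < hm c (.app (.fn f) args l) := by
  set σ : Fin (D.arity f) → HATm F X := fun i => args.get (Fin.cast h.symm i) with hσ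
  set A := (args.map (hm c)).sum with hA
  set C := c (l ++ [f]) with hC
  have hC1 : 1 ≤ C := le_trans (by norm_num) (hc2 _)
  have hgetA : ∀ i : Fin (D.arity f), hm c (σ i) ≤ A := by
    intro i
    apply List.single_le_sum (fun _ _ => Nat.zero_le _)
    apply List.mem_map_of_mem
    apply List.get_mem
  have hkey := hm_hAnnSub_le c (fun l' => le_trans (by norm_num) (hc2 l')) σ (l ++ [f]) (D.body f)
  have hvs : vSum (fun v => hm c (σ v)) (D.body f) ≤ hsize (D.body f) * A :=
    vSum_le _ A hgetA _
  have hs := hBsz f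
  have hpow : C ^ hsize (D.body f) ≤ C ^ B := Nat.pow_le_pow_right hC1 hs
  have hrhs : hm c (hAnnSub σ (l ++ [f]) (D.body f)) ≤ C ^ B * (B + B * A) := by
    calc hm c (hAnnSub σ (l ++ [f]) (D.body f))
        ≤ C ^ hsize (D.body f) * (hsize (D.body f) + vSum (fun v => hm c (σ v)) (D.body f)) :=
          hkey
      _ ≤ C ^ B * (B + B * A) :=
          Nat.mul_le_mul hpow (by
            have h5 : hsize (D.body f) * A ≤ B * A := Nat.mul_le_mul_right _ hs
            omega)
  have hlhs : hm c (.app (.fn f) args l : HATm F X) = B * C ^ B * (2 + A) := by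
    rw [hm_app, hm_fn, hstep]
    try ring
  rw [hlhs]
  have hpos : 1 ≤ B * C ^ B := Nat.one_le_iff_ne_zero.mpr (by positivity)
  calc hm c (hAnnSub σ (l ++ [f]) (D.body f)) ≤ C ^ B * (B + B * A) := hrhs
    _ = B * C ^ B * (1 + A) := by ring
    _ < B * C ^ B * (2 + A) := Nat.mul_lt_mul_of_pos_left (by omega) (by omega)

lemma hared_hm_lt (D : HEnv F) (c : List F → ℕ) (hc2 : ∀ l, 2 ≤ c l)
    (hhead : ∀ (f : F) (l : List F) (args : List (HATm F X)) (h : args.length = D.arity f),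
      f ∉ l →
      hm c (hAnnSub (fun i => args.get (Fin.cast h.symm i)) (l ++ [f]) (D.body f))
        < hm c (.app (.fn f) args l)) :
    ∀ t t' : HATm F X, HARed D t t' → hm c t' < hm c t := by
  intro t t' hred
  induction hred with
  | head f l args h hf => exact hhead f l args h hf
  | congrFn t t' args l _ ih =>
    simp only [hm_app]
    have h1 : 0 < c l := lt_of_lt_of_le (by norm_num) (hc2 l)
    exact Nat.mul_lt_mul_of_pos_left (by omega) h1
  | congrArg u pre post l t t' _ ih =>
    simp only [hm_app, List.map_append, List.sum_append, List.map_cons, List.sum_cons]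
    have h1 : 0 < c l := lt_of_lt_of_le (by norm_num) (hc2 l)
    exact Nat.mul_lt_mul_of_pos_left (by omega) h1


end Main

/-- closed-higher-order correctness: annotated reduction in the
closed-higher-order calculus is strongly normalizing: there is no infinite
sequence of annotated reduction steps. -/
theorem higher_order_annotated_reduction_strongly_normalizing
    {F X : Type} [Finite F] [Countable X] (D : HEnv F) :
    ¬ ∃ seq : ℕ → HATm F X, ∀ n, HARed D (seq n) (seq (n + 1)) := by
  rintro ⟨seq, hseq⟩
  classical
  cases nonempty_fintype F
  set B := 1 + Finset.univ.sup (fun f : F => hsize (D.body f)) with hBdef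
  have hB : 1 ≤ B := by omega
  have hBsz : ∀ f : F, hsize (D.body f) ≤ B := by
    intro f
    have h := Finset.le_sup (f := fun g : F => hsize (D.body g)) (Finset.mem_univ f)
    omega
  set coef : ℕ → ℕ := fun k => Nat.rec (B + 2) (fun _ ck => B * ck ^ B) k with hcoef
  have hcoef2 : ∀ k, 2 ≤ coef k := by
    intro k
    induction k with
    | zero => exact Nat.le_add_left 2 B
    | succ k ih =>
      have h1 : coef (k + 1) = B * coef k ^ B := rfl
      have h2 : coef k ≤ coef k ^ B := Nat.le_self_pow (by omega) _
      calc (2:ℕ) ≤ coef k := ih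
        _ ≤ coef k ^ B := h2
        _ ≤ B * coef k ^ B := Nat.le_mul_of_pos_left _ (by omega)
        _ = coef (k + 1) := h1.symm
  set c : List F → ℕ := fun l => coef ((Finset.univ \ l.toFinset).card) with hc
  have hc2 : ∀ l, 2 ≤ c l := fun l => hcoef2 _
  have hfuel : ∀ (f : F) (l : List F), f ∉ l →
      (Finset.univ \ l.toFinset).card = (Finset.univ \ (l ++ [f]).toFinset).card + 1 := by
    intro f l hf
    have h1 : (l ++ [f]).toFinset = insert f l.toFinset := by
      simp [List.toFinset_append]
    have hfm : f ∉ l.toFinset := by simpa using hf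
    have h2 : (insert f l.toFinset).card = l.toFinset.card + 1 := Finset.card_insert_of_notMem hfm
    have h3 : l.toFinset.card ≤ Finset.univ.card := Finset.card_le_univ _
    have h4 : (insert f l.toFinset).card ≤ Finset.univ.card :=
      Finset.card_le_univ _
    rw [h1, Finset.card_sdiff_of_subset (Finset.subset_univ _), Finset.card_sdiff_of_subset (Finset.subset_univ _), h2]
    omega
  have hstep : ∀ (f : F) (l : List F), f ∉ l → c l = B * (c (l ++ [f])) ^ B := by
    intro f l hf
    show coef ((Finset.univ \ l.toFinset).card) = B * coef _ ^ B
    rw [hfuel f l hf]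
  have hdec : ∀ n, hm c (seq (n + 1)) < hm c (seq n) := by
    intro n
    apply hared_hm_lt D c hc2 _ _ _ (hseq n)
    intro f l args h hf
    exact head_lt D B hB hBsz c hc2 f l args h (hstep f l hf)
  have hbound : ∀ n, hm c (seq n) + n ≤ hm c (seq 0) := by
    intro n
    induction n with
    | zero => omega
    | succ n ih => have := hdec n; omega
  have := hbound (hm c (seq 0) + 1)
  omega
end

section
/- (Incompleteness in the closed-higher-order fragment.) There exist a definition environment D over a finite set of function names and a closed term t of the closed-higher-order calculus such that: (1) t β-reduces in finitely many steps to a β-normal form, yet (2) every maximal annotated reduction sequence starting from the empty-trace annotation of t ends in a term that contains a blocked redex and whose erasure is not a β-normal form. A witness is D = { f(p,q) = p(f(q,q)), id(x) = x, stop(x) = stop } with t = f(id, stop): the unannotated term reduces to the normal form stop, but annotated reduction blocks at f(stop,stop) annotated with a trace containing f. -/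
inductive Nm | f | idn | stp deriving DecidableEq

instance : Fintype Nm := ⟨{Nm.f, Nm.idn, Nm.stp}, fun x => by cases x <;> simp⟩

def Denv : HEnv Nm where
  arity := fun g => match g with | .f => 2 | _ => 1
  body := fun g => match g with
    | .f => .app (.var 0) [.app (.fn .f) [.var 1, .var 1]]
    | .idn => .var 0
    | .stp => .fn .stp

def tw : HTm Nm Empty := .app (.fn .f) [.fn .idn, .fn .stp]
def A2 : HATm Nm Empty := .app (.fn .f) [.fn .stp, .fn .stp] [.f]
def A1 : HATm Nm Empty := .app (.fn .idn) [A2] [.f]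
def A0 : HATm Nm Empty := .app (.fn .f) [.fn .idn, .fn .stp] ([] : List Nm)
def B2 : HTm Nm Empty := .app (.fn .f) [.fn .stp, .fn .stp]
def B1 : HTm Nm Empty := .app (.fn .idn) [B2]
def B3 : HTm Nm Empty := .app (.fn .stp) [B2]

lemma no_fn_ared (g : Nm) (w : HATm Nm Empty) : ¬ HARed Denv (.fn g) w := by
  intro h; cases h

lemma no_fn_beta (g : Nm) (w : HTm Nm Empty) : ¬ HBeta Denv (.fn g) w := by
  intro h; cases h

lemma annInit_eq : hAnnInit tw = A0 := by
  simp [hAnnInit, hAnnSub, tw, A0]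

lemma stepA2 (w : HATm Nm Empty) : ¬ HARed Denv A2 w := by
  intro h
  rw [A2] at h
  generalize hargs : [HATm.fn Nm.stp, HATm.fn Nm.stp] = args0 at h
  cases h with
  | head g l args hlen hn => exact hn (by simp)
  | congrFn t t' args l h => exact no_fn_ared _ _ h
  | congrArg u pre post l t t' h =>
    rcases pre with _ | ⟨a, _ | ⟨b, pre⟩⟩
    · injection hargs with h1 h2; subst h1; exact no_fn_ared _ _ h
    · injection hargs with h1 h2; injection h2 with h2 h3; subst h2
      exact no_fn_ared _ _ h
    · injection hargs with h1 h2; injection h2 with h2 h3; simp at h3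

lemma stepA1 (w : HATm Nm Empty) (h : HARed Denv A1 w) : w = A2 := by
  rw [A1] at h
  generalize hargs : [A2] = args0 at h
  cases h with
  | head g l args hlen hn => subst hargs; simp [hAnnSub, Denv, A2]
  | congrFn t t' args l h => exact absurd h (no_fn_ared _ _)
  | congrArg u pre post l t t' h =>
    rcases pre with _ | ⟨a, pre⟩
    · injection hargs with h1 h2; subst h1; exact absurd h (stepA2 _)
    · injection hargs with h1 h2; simp at h2

lemma stepA0 (w : HATm Nm Empty) (h : HARed Denv A0 w) : w = A1 := by
  rw [A0] at h
  generalize hargs : [HATm.fn Nm.idn, HATm.fn Nm.stp] = args0 at h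
  cases h with
  | head g l args hlen hn => subst hargs; simp [hAnnSub, Denv, A1, A2]
  | congrFn t t' args l h => exact absurd h (no_fn_ared _ _)
  | congrArg u pre post l t t' h =>
    rcases pre with _ | ⟨a, _ | ⟨b, pre⟩⟩
    · injection hargs with h1 h2; subst h1; exact absurd h (no_fn_ared _ _)
    · injection hargs with h1 h2; injection h2 with h2 h3; subst h2
      exact absurd h (no_fn_ared _ _)
    · injection hargs with h1 h2; injection h2 with h2 h3; simp at h3

lemma redA0 : HARed Denv A0 A1 := by
  have h := HARed.head (D := Denv) (X := Empty) Nm.f [] [.fn .idn, .fn .stp] rfl (by simp)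
  simpa [hAnnSub, Denv, A0, A1, A2] using h

lemma redA1 : HARed Denv A1 A2 := by
  have h := HARed.head (D := Denv) (X := Empty) Nm.idn [.f] [A2] rfl (by simp)
  simpa [hAnnSub, Denv, A1] using h

lemma eraseA2 : hErase A2 = B2 := by
  simp [hErase, A2, B2]

lemma redB0 : HBeta Denv tw B1 := by
  have h := HBeta.head (D := Denv) (X := Empty) Nm.f [.fn .idn, .fn .stp] rfl
  simpa [hSubst, Denv, tw, B1, B2] using h

lemma redB1 : HBeta Denv B1 B2 := by
  have h := HBeta.head (D := Denv) (X := Empty) Nm.idn [B2] rfl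
  simpa [hSubst, Denv, B1] using h

lemma redB2 : HBeta Denv B2 B3 := by
  have h := HBeta.head (D := Denv) (X := Empty) Nm.f [.fn .stp, .fn .stp] rfl
  simpa [hSubst, Denv, B2, B3] using h

lemma redB3 : HBeta Denv B3 (.fn .stp) := by
  have h := HBeta.head (D := Denv) (X := Empty) Nm.stp [B2] rfl
  simpa [hSubst, Denv, B3] using h

lemma reach (w : HATm Nm Empty) (h : Relation.ReflTransGen (HARed Denv) A0 w) :
    w = A0 ∨ w = A1 ∨ w = A2 := by
  induction h with
  | refl => left; rfl
  | tail h1 h2 ih =>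
    rcases ih with rfl | rfl | rfl
    · exact Or.inr (Or.inl (stepA0 _ h2))
    · exact Or.inr (Or.inr (stepA1 _ h2))
    · exact absurd h2 (stepA2 _)

/-- incompleteness in the closed-higher-order fragment: there
exist a definition environment over a finite set of function names and a
closed term `t` (closedness is enforced by taking the variable type empty)
such that (1) `t` β-reduces in finitely many steps to a β-normal form, yet
(2) every maximal annotated reduction sequence starting from the empty-trace
annotation of `t` ends in a term that contains a blocked redex and whose
erasure is not a β-normal form. -/
theorem higher_order_monitor_incomplete :
    ∃ (F : Type) (_ : Fintype F) (D : HEnv F) (t : HTm F Empty),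
      (∃ v : HTm F Empty,
          Relation.ReflTransGen (HBeta D) t v ∧ ∀ v', ¬ HBeta D v v') ∧
      (∀ w : HATm F Empty,
          Relation.ReflTransGen (HARed D) (hAnnInit t) w →
          (∀ w', ¬ HARed D w w') →
          HHasBlockedRedex w ∧ ∃ u, HBeta D (hErase w) u) := by
  refine ⟨Nm, inferInstance, Denv, tw, ⟨.fn .stp, ?_, ?_⟩, ?_⟩
  · exact .head redB0 (.head redB1 (.head redB2 (.head redB3 .refl)))
  · exact no_fn_beta _
  · intro w hw hmax
    rw [annInit_eq] at hw
    rcases reach w hw with rfl | rfl | rfl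
    · exact absurd redA0 (hmax _)
    · exact absurd redA1 (hmax _)
    · refine ⟨⟨Nm.f, [.fn .stp, .fn .stp], [Nm.f], ?_, by simp⟩, B3, ?_⟩
      · rw [A2]; exact HASubtm.refl _
      · rw [eraseA2]; exact redB2
end
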